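/- arXiv:1503.06509 — 2 statements merged into one kernel-verified Lean document; each statement's English description precedes it below -/
import Mathlib

section
/- Suppose S is a locally maximal product-free set of size 3 in a finite group G such that every 2-element subset of S generates ⟨S⟩ and S contains no involutions. Then |G| ≤ 24. -/
/-!
Adjoining any `g ∉ S` to `S` breaks product-freeness, so `g ∈ S S ∪ S S⁻¹ ∪ S⁻¹ S` or `g² ∈ S`;
together with `S` the three product sets have at most 25 elements. Elements outside `⟨S⟩` square
into `S`; for such `g`, `S` contains `p = g²` and `p⁻¹`, hence `⟨S⟩ = ⟨p⟩`, and
`(g³)² = p³ ∈ {p, p⁻¹}` gives `p⁴ = 1`, leaving no room for the third element of `S`. So `⟨S⟩ = G`,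
and any two elements of `S` generate `G`.

In an abelian group the 25 short products collapse to 16. If `G` is cyclic, every element of `S`
has at most two square roots: `|G| ≤ 16 + 6`. Otherwise no element of `S` is a power of another,
and locating `g⁻¹` shows that a square root `g` of an element of `S` that is not a short product
satisfies `g⁻¹ ∈ S S`; for abelian `G` this again gives `|G| ≤ 16 + 6`. For non-abelian `G` we have `|G| ≠ 25`, and locating `x⁻¹` for `x ∈ S` shows that either
`S = {x, y, z}` with `x y z = 1`, or all elements of `S` have order `3`. In both cases only a few
candidates `(u v)⁻¹` remain, and each one forces `5 ∣ |G|`, `6 ∣ |G|`, or (as `x` conjugates `y x`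
to `(y x)²`) an order of `y x` dividing `gcd (|G|, 2 ^ |G| - 1)`, which is at most `3` when
`26 ≤ |G| ≤ 31`.
-/

open scoped Pointwise

def productFree {G : Type*} [Group G] (S : Set G) : Prop :=
  ∀ a ∈ S, ∀ b ∈ S, a * b ∉ S

def locallyMaximalPF {G : Type*} [Group G] (S : Set G) : Prop :=
  productFree S ∧ ∀ T : Set G, productFree T → S ⊆ T → T = S

open Subgroup

theorem Set.exists_eq_insert_insert_of_ncard_eq_three {α : Type*} {S : Set α} (hS : S.ncard = 3)
    {p q : α} (hp : p ∈ S) (hq : q ∈ S) (hpq : p ≠ q) : ∃ t, t ≠ p ∧ t ≠ q ∧ S = {p, q, t} := by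
  have hsub : {p, q} ⊆ S := Set.insert_subset hp (Set.singleton_subset_iff.mpr hq)
  obtain ⟨t, ht⟩ : ∃ t, S \ {p, q} = {t} := by
    rw [← Set.ncard_eq_one, Set.ncard_sdiff hsub, Set.ncard_pair hpq, hS]
  have htS : t ∈ S \ {p, q} := ht ▸ rfl
  refine ⟨t, fun h => htS.2 (.inl h), fun h => htS.2 (.inr h), ?_⟩
  rw [← Set.union_sdiff_cancel hsub, ht]
  ext
  simp only [Set.mem_union, Set.mem_insert_iff, Set.mem_singleton_iff]
  tauto

theorem Nat.card_le_length_of_forall_mem {α : Type*} (L : List α) (h : ∀ a, a ∈ L) :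
    Nat.card α ≤ L.length := by
  have hs : Function.Surjective L.get := fun a => List.mem_iff_get.mp (h a)
  simpa using Nat.card_le_card_of_surjective _ hs

theorem Nat.card_le_length_add_card_of_injOn {α : Type*} [Fintype α] [DecidableEq α] (L : List α)
    (T : Finset α) (f : α → α) (hf : ∀ a ∉ L, f a ∈ T) (hinj : Set.InjOn f {a | a ∉ L}) :
    Nat.card α ≤ L.length + T.card := by
  rw [Nat.card_eq_fintype_card, ← Finset.card_univ]
  calc Finset.univ.card ≤ (L.toFinset ∪ Finset.univ.filter (· ∉ L)).card :=
        Finset.card_le_card fun a _ => by by_cases a ∈ L <;> simp [*]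
    _ ≤ L.toFinset.card + (Finset.univ.filter (· ∉ L)).card := Finset.card_union_le _ _
    _ ≤ L.length + T.card :=
        add_le_add (List.toFinset_card_le L)
          (Finset.card_le_card_of_injOn f (fun a ha => hf a (by simpa using ha))
            (fun a ha b hb => hinj (by simpa using ha) (by simpa using hb)))

theorem Nat.gcd_two_pow_sub_one_dvd_three {n : ℕ} (h₁ : 26 ≤ n) (h₂ : n ≤ 31) :
    Nat.gcd n (2 ^ n - 1) ∣ 3 := by
  interval_cases n <;> norm_num

section Group

variable {G : Type*} [Group G]

theorem mul_comm_of_closure_pair_eq_top {a b : G} (h : closure {a, b} = ⊤) (hab : Commute a b)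
    (p q : G) : p * q = q * p := by
  have := isMulCommutative_closure (k := {a, b}) (by
    rintro x (rfl | rfl) y (rfl | rfl) <;> first | rfl | exact hab.eq | exact hab.eq.symm)
  exact setLike_mul_comm (h ▸ mem_top p) (h ▸ mem_top q)

theorem orderOf_dvd_pow_orderOf_sub_one {x r : G} {n : ℕ} (h : x * r * x⁻¹ = r ^ n) :
    orderOf r ∣ n ^ orderOf x - 1 := by
  have hiter (k : ℕ) : x ^ k * r * (x ^ k)⁻¹ = r ^ n ^ k := by
    induction k with
    | zero => simp
    | succ k ih =>
      rw [pow_succ', mul_inv_rev, show x * x ^ k * r * ((x ^ k)⁻¹ * x⁻¹) =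
        x * (x ^ k * r * (x ^ k)⁻¹) * x⁻¹ by group, ih, ← conj_pow, h, ← pow_mul, pow_succ']
  have hfix : r ^ n ^ orderOf x = r := by simpa [pow_orderOf_eq_one] using (hiter (orderOf x)).symm
  rw [orderOf_dvd_iff_pow_eq_one]
  rcases Nat.eq_zero_or_pos (n ^ orderOf x) with h0 | hpos
  · simp [h0]
  · exact mul_eq_right.mp (by rw [← pow_succ, Nat.sub_add_cancel hpos, hfix])

theorem mul_mul_eq_one_rotate {a b c : G} (h : a * b * c = 1) : b * c * a = 1 := by
  rw [mul_assoc] at h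
  exact mul_eq_one_comm.mp h

theorem twenty_six_le_natCard (hnc : ¬ ∀ a b : G, a * b = b * a) (hN : 24 < Nat.card G) :
    26 ≤ Nat.card G := by
  have : Fact (Nat.Prime 5) := ⟨by norm_num⟩
  have h25 : Nat.card G ≠ 5 ^ 2 := fun h =>
    hnc (IsPGroup.isMulCommutative_of_card_eq_prime_sq h).is_comm.comm
  omega

theorem six_dvd_natCard_of_mul_self_eq {k w : G} (hk : k * k = w) (hw : w ^ 3 = 1) (hw1 : w ≠ 1)
    (hk3 : k ^ 3 ≠ 1) : 6 ∣ Nat.card G := by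
  have : Fact (Nat.Prime 3) := ⟨Nat.prime_three⟩
  have : Fact (Nat.Prime 2) := ⟨Nat.prime_two⟩
  have h3 : orderOf w = 3 := orderOf_eq_prime hw hw1
  have h2 : orderOf (k ^ 3) = 2 :=
    orderOf_eq_prime (by rw [← pow_mul, show 3 * 2 = 2 * 3 from rfl, pow_mul, sq, hk, hw]) hk3
  have := h3 ▸ _root_.orderOf_dvd_natCard w
  have := h2 ▸ _root_.orderOf_dvd_natCard (k ^ 3)
  omega

end Group

section LocallyMaximal

variable {G : Type*} [Group G] {S : Set G}

theorem productFree.one_notMem (h : productFree S) : (1 : G) ∉ S :=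
  fun h1 => h 1 h1 1 h1 (by rwa [one_mul])

theorem productFree.mul_self_ne_one (h : productFree S) (hinv : ∀ s ∈ S, orderOf s ≠ 2) :
    ∀ s ∈ S, s * s ≠ 1 := by
  intro s hs hss
  have : orderOf s ∣ 2 := orderOf_dvd_of_pow_eq_one (by rwa [sq])
  rcases (Nat.dvd_prime Nat.prime_two).mp this with h1 | h2
  · exact h.one_notMem (orderOf_eq_one_iff.mp h1 ▸ hs)
  · exact hinv s hs h2

theorem locallyMaximalPF.cover (h : locallyMaximalPF S) (hS : S.Nonempty) (g : G) :
    g ∈ S ∨ g * g ∈ S ∨ ∃ u ∈ S, ∃ v ∈ S, g = u * v ∨ g = u * v⁻¹ ∨ g = u⁻¹ * v := by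
  by_contra! hg
  obtain ⟨hgS, hgg, hprod⟩ := hg
  have hg1 : g ≠ 1 := by
    rintro rfl
    obtain ⟨s, hs⟩ := hS
    exact (hprod s hs s hs).2.1 (mul_inv_cancel s).symm
  refine hgS (h.2 (insert g S) ?_ (Set.subset_insert g S) ▸ Set.mem_insert g S)
  rintro a (rfl | ha) b (rfl | hb) (hab | hab)
  · exact hg1 (by simpa using hab)
  · exact hgg hab
  · exact h.1.one_notMem (mul_eq_left.mp hab ▸ hb)
  · exact (hprod _ hab b hb).2.1 (by group)
  · exact h.1.one_notMem (mul_eq_right.mp hab ▸ ha)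
  · exact (hprod a ha _ hab).2.2 (by group)
  · exact (hprod a ha b hb).1 hab.symm
  · exact h.1 a ha b hb hab

theorem locallyMaximalPF.mul_self_mem_of_notMem_closure (h : locallyMaximalPF S)
    (hS : S.Nonempty) {g : G} (hg : g ∉ closure S) : g * g ∈ S := by
  rcases h.cover hS g with hgS | hgg | ⟨u, hu, v, hv, rfl | rfl | rfl⟩
  · exact absurd (subset_closure hgS) hg
  · exact hgg
  · exact absurd (mul_mem (subset_closure hu) (subset_closure hv)) hg
  · exact absurd (mul_mem (subset_closure hu) (inv_mem (subset_closure hv))) hg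
  · exact absurd (mul_mem (inv_mem (subset_closure hu)) (subset_closure hv)) hg

theorem eq_or_eq_inv_of_mem_of_inv_mem {p t s : G} (htp : t ≠ p) (htp' : t ≠ p⁻¹)
    (ht : t * t ≠ 1) (hs : s ∈ ({p, p⁻¹, t} : Set G)) (hs' : s⁻¹ ∈ ({p, p⁻¹, t} : Set G)) :
    s = p ∨ s = p⁻¹ := by
  simp only [Set.mem_insert_iff, Set.mem_singleton_iff] at hs hs'
  rcases hs with rfl | rfl | rfl
  · exact .inl rfl
  · exact .inr rfl
  rcases hs' with h | h | h
  · exact absurd (by rw [← h, inv_inv]) htp'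
  · exact absurd (inv_injective h) htp
  · exact absurd (mul_eq_one_iff_eq_inv.mpr h.symm) ht

theorem eq_or_eq_inv_or_mul_self_eq_one_of_mem_zpowers {p t : G} (hp : p ^ 4 = 1)
    (ht : t ∈ zpowers p) : t = p ∨ t = p⁻¹ ∨ t * t = 1 := by
  obtain ⟨k, rfl⟩ := mem_zpowers_iff.mp ht
  rw [zpow_eq_zpow_emod' k hp, Nat.cast_ofNat]
  have : k % 4 = 0 ∨ k % 4 = 1 ∨ k % 4 = 2 ∨ k % 4 = 3 := by omega
  rcases this with hk | hk | hk | hk <;> rw [hk]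
  · simp
  · simp
  · exact .inr (.inr (by rw [← zpow_add]; exact_mod_cast hp))
  · exact .inr (.inl (eq_inv_of_mul_eq_one_left (by rw [← zpow_add_one]; exact_mod_cast hp)))

theorem closure_eq_top_of_ncard_eq_three (h : locallyMaximalPF S) (hcard : S.ncard = 3)
    (hsq : ∀ s ∈ S, s * s ≠ 1)
    (hgen : ∀ x ∈ S, ∀ y ∈ S, x ≠ y → closure {x, y} = closure S) : closure S = ⊤ := by
  have hsqrt {w : G} (hw : w ∉ closure S) : w * w ∈ S :=
    h.mul_self_mem_of_notMem_closure (Set.nonempty_of_ncard_ne_zero (by omega)) hw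
  have hsqrt_inv {w : G} (hw : w ∉ closure S) : (w * w)⁻¹ ∈ S := by
    simpa only [mul_inv_rev] using hsqrt (w := w⁻¹) (by rwa [inv_mem_iff])
  by_contra htop
  obtain ⟨g, hg⟩ : ∃ g, g ∉ closure S := by
    by_contra! hall
    exact htop ((eq_top_iff' _).mpr hall)
  obtain ⟨p, hgp⟩ : ∃ p, g * g = p := ⟨_, rfl⟩
  have hp : p ∈ S := hgp ▸ hsqrt hg
  have hpp : p ≠ p⁻¹ := fun e => hsq p hp (by nth_rewrite 2 [e]; exact mul_inv_cancel p)
  obtain ⟨t, htp, htp', rfl⟩ :=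
    Set.exists_eq_insert_insert_of_ncard_eq_three hcard hp (hgp ▸ hsqrt_inv hg) hpp
  have ht1 : t * t ≠ 1 := hsq t (by simp)
  have hp4 : p ^ 4 = 1 := by
    have hg3 : g * p ∉ closure {p, p⁻¹, t} := fun hm =>
      hg (by simpa using mul_mem hm (inv_mem (subset_closure hp)))
    have hcube : (g * p) * (g * p) = p * p * p := by simp only [← hgp, mul_assoc]
    rcases eq_or_eq_inv_of_mem_of_inv_mem htp htp' ht1 (hsqrt hg3) (hsqrt_inv hg3) with h3 | h3 <;>
      rw [hcube] at h3
    · exact absurd (by simpa [mul_assoc] using h3) (hsq p hp)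
    · rw [← mul_inv_eq_one, inv_inv] at h3
      rwa [pow_succ, pow_succ, pow_succ, pow_one]
  have ht : t ∈ zpowers p := by
    have : t ∈ closure {p, p⁻¹} := hgen p hp p⁻¹ (by simp) hpp ▸ subset_closure (by simp)
    refine closure_le _ |>.mpr ?_ this
    simp [Set.insert_subset_iff, inv_mem_iff]
  rcases eq_or_eq_inv_or_mul_self_eq_one_of_mem_zpowers hp4 ht with h | h | h
  exacts [htp h, htp' h, ht1 h]

/-- The elements of `S ∪ S * S ∪ S * S⁻¹ ∪ S⁻¹ * S` for `S = {x, y, z}`. -/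
def shortProducts (x y z : G) : List G :=
  [1, x, y, z, x * x, x * y, x * z, y * x, y * y, y * z, z * x, z * y, z * z,
    x * y⁻¹, x * z⁻¹, y * x⁻¹, y * z⁻¹, z * x⁻¹, z * y⁻¹,
    x⁻¹ * y, x⁻¹ * z, y⁻¹ * x, y⁻¹ * z, z⁻¹ * x, z⁻¹ * y]

theorem mem_shortProducts {x y z g : G} (hS : S = {x, y, z})
    (hg : g ∈ S ∨ ∃ u ∈ S, ∃ v ∈ S, g = u * v ∨ g = u * v⁻¹ ∨ g = u⁻¹ * v) :
    g ∈ shortProducts x y z := by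
  subst hS
  simp only [Set.mem_insert_iff, Set.mem_singleton_iff] at hg
  rcases hg with hg | ⟨u, hu, v, hv, hg⟩
  · rcases hg with rfl | rfl | rfl <;> simp [shortProducts]
  · rcases hu with rfl | rfl | rfl <;> rcases hv with rfl | rfl | rfl <;>
      rcases hg with rfl | rfl | rfl <;> simp [shortProducts]

theorem locallyMaximalPF.mem_shortProducts_or_mul_self_mem (h : locallyMaximalPF S)
    {x y z : G} (hS : S = {x, y, z}) (g : G) : g ∈ shortProducts x y z ∨ g * g ∈ S := by
  rcases h.cover (hS ▸ Set.insert_nonempty _ _) g with hg | hg | hg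
  · exact .inl (mem_shortProducts hS (.inl hg))
  · exact .inr hg
  · exact .inl (mem_shortProducts hS (.inr hg))

end LocallyMaximal

section Triple

variable {G : Type*} [Group G] {S : Set G}

/-- `S = {x, y, z}` is a locally maximal product-free set without involutions in a non-cyclic
group, any two of whose elements generate the group. -/
structure IsLMPFTriple (S : Set G) (x y z : G) : Prop where
  lmpf : locallyMaximalPF S
  eq : S = {x, y, z}
  ne₁₂ : x ≠ y
  ne₁₃ : x ≠ z
  ne₂₃ : y ≠ z
  mul_self_ne_one : ∀ s ∈ S, s * s ≠ 1
  closure_pair : ∀ p ∈ S, ∀ q ∈ S, p ≠ q → closure {p, q} = ⊤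
  not_isCyclic : ¬ IsCyclic G

namespace IsLMPFTriple

variable {x y z : G}

theorem mem_iff (hT : IsLMPFTriple S x y z) {s : G} : s ∈ S ↔ s = x ∨ s = y ∨ s = z := by
  rw [hT.eq]; simp

theorem mem₁ (hT : IsLMPFTriple S x y z) : x ∈ S := hT.mem_iff.mpr (.inl rfl)
theorem mem₂ (hT : IsLMPFTriple S x y z) : y ∈ S := hT.mem_iff.mpr (.inr (.inl rfl))
theorem mem₃ (hT : IsLMPFTriple S x y z) : z ∈ S := hT.mem_iff.mpr (.inr (.inr rfl))

theorem ne_one (hT : IsLMPFTriple S x y z) {s : G} (hs : s ∈ S) : s ≠ 1 :=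
  fun h => hT.lmpf.1.one_notMem (h ▸ hs)

theorem rotate (hT : IsLMPFTriple S x y z) : IsLMPFTriple S y z x :=
  { hT with
    eq := hT.eq.trans (by ext; simp only [Set.mem_insert_iff, Set.mem_singleton_iff]; tauto)
    ne₁₂ := hT.ne₂₃
    ne₁₃ := hT.ne₁₂.symm
    ne₂₃ := hT.ne₁₃.symm }

theorem swap (hT : IsLMPFTriple S x y z) : IsLMPFTriple S y x z :=
  { hT with
    eq := hT.eq.trans (Set.insert_comm x y {z})
    ne₁₂ := hT.ne₁₂.symm
    ne₁₃ := hT.ne₂₃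
    ne₂₃ := hT.ne₁₃ }

theorem exists_isLMPFTriple_of_ne (hT : IsLMPFTriple S x y z) {u v : G} (hu : u ∈ S) (hv : v ∈ S)
    (huv : u ≠ v) : ∃ w, IsLMPFTriple S u v w := by
  rcases hT.mem_iff.mp hu with rfl | rfl | rfl <;> rcases hT.mem_iff.mp hv with rfl | rfl | rfl <;>
    first
    | exact absurd rfl huv
    | exact ⟨_, hT⟩ | exact ⟨_, hT.rotate⟩ | exact ⟨_, hT.rotate.rotate⟩
    | exact ⟨_, hT.swap⟩ | exact ⟨_, hT.swap.rotate⟩ | exact ⟨_, hT.swap.rotate.rotate⟩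

theorem eq_of_mem_zpowers (hT : IsLMPFTriple S x y z) {s t k : G} (hs : s ∈ S) (ht : t ∈ S)
    (hsk : s ∈ zpowers k) (htk : t ∈ zpowers k) : s = t := by
  by_contra hst
  refine hT.not_isCyclic (isCyclic_iff_exists_zpowers_eq_top.mpr ⟨k, eq_top_iff.mpr ?_⟩)
  rw [← hT.closure_pair s hs t ht hst, closure_le]
  simp [Set.insert_subset_iff, hsk, htk]

theorem exists_eq_inv_mul_of_notMem (hT : IsLMPFTriple S x y z) {g : G}
    (hg : g ∉ shortProducts x y z) :
    g * g ∈ S ∧ ∃ u ∈ S, ∃ v ∈ S, g = (u * v)⁻¹ := by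
  have hgg := (hT.lmpf.mem_shortProducts_or_mul_self_mem hT.eq g).resolve_left hg
  refine ⟨hgg, ?_⟩
  rcases hT.lmpf.cover ⟨x, hT.mem₁⟩ g⁻¹ with hi | hii | ⟨u, hu, v, hv, he | he | he⟩
  · have : g * g = g⁻¹ :=
      hT.eq_of_mem_zpowers hgg hi
        (mem_zpowers_iff.mpr ⟨-2, by rw [zpow_neg, zpow_two, mul_inv_rev, inv_inv]⟩) (mem_zpowers _)
    refine absurd (mem_shortProducts hT.eq (.inr ⟨g⁻¹, hi, g⁻¹, hi, .inl ?_⟩)) hg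
    rw [← mul_inv_rev, this, inv_inv]
  · have : g⁻¹ * g⁻¹ = g * g :=
      hT.eq_of_mem_zpowers hii hgg (mem_zpowers_iff.mpr ⟨-1, by group⟩) (mem_zpowers _)
    refine absurd ?_ (hT.mul_self_ne_one _ hgg)
    nth_rewrite 2 [← this]; group
  · exact ⟨u, hu, v, hv, by rw [← he, inv_inv]⟩
  · refine absurd (mem_shortProducts hT.eq (.inr ⟨v, hv, u, hu, .inr (.inl ?_)⟩)) hg
    rw [← inv_inv g, he]; group
  · refine absurd (mem_shortProducts hT.eq (.inr ⟨v, hv, u, hu, .inr (.inr ?_)⟩)) hg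
    rw [← inv_inv g, he]; group

theorem inv_mul_sq_eq_of_mem (hT : IsLMPFTriple S x y z) (h : (x * y)⁻¹ * (x * y)⁻¹ ∈ S) :
    (x * y)⁻¹ * (x * y)⁻¹ = z := by
  obtain ⟨k, hk⟩ : ∃ k, (x * y)⁻¹ = k := ⟨_, rfl⟩
  have hxy : x * y = k⁻¹ := by rw [← hk, inv_inv]
  rw [hk] at h ⊢
  rcases hT.mem_iff.mp h with hx | hy | hz
  · refine absurd (hT.eq_of_mem_zpowers (k := k) hT.mem₁ hT.mem₂ (mem_zpowers_iff.mpr ⟨2, ?_⟩)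
      (mem_zpowers_iff.mpr ⟨-3, ?_⟩)) hT.ne₁₂
    · rw [zpow_two, hx]
    · rw [show y = x⁻¹ * (x * y) by group, hxy, ← hx]; group
  · refine absurd (hT.eq_of_mem_zpowers (k := k) hT.mem₁ hT.mem₂ (mem_zpowers_iff.mpr ⟨-3, ?_⟩)
      (mem_zpowers_iff.mpr ⟨2, ?_⟩)) hT.ne₁₂
    · rw [show x = x * y * y⁻¹ by group, hxy, ← hy]; group
    · rw [zpow_two, hy]
  · exact hz

theorem pow_three_eq_one_or (hT : IsLMPFTriple S x y z) :
    x ^ 3 = 1 ∨ x * y * z = 1 ∨ x * z * y = 1 := by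
  have hx := hT.mem₁
  have hpow {t : G} (ht : t ∈ S) (htx : t ∈ zpowers x) : t = x :=
    hT.eq_of_mem_zpowers ht hx htx (mem_zpowers x)
  have hx2 : x⁻¹ * x⁻¹ ∈ zpowers x := mul_mem (inv_mem (mem_zpowers x)) (inv_mem (mem_zpowers x))
  rcases hT.lmpf.cover ⟨x, hx⟩ x⁻¹ with hi | hii | ⟨u, hu, v, hv, he | he | he⟩
  · exact absurd (mul_eq_one_iff_eq_inv.mpr (hpow hi (inv_mem (mem_zpowers x))).symm)
      (hT.mul_self_ne_one x hx)
  · refine .inl ?_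
    calc x ^ 3 = x * x * (x⁻¹ * x⁻¹) := by
          rw [hpow hii hx2]; simp only [pow_succ, pow_zero, one_mul]
      _ = 1 := by group
  · have hsq_mem {s : G} : (s * s)⁻¹ ∈ zpowers s :=
      inv_mem (mul_mem (mem_zpowers s) (mem_zpowers s))
    rcases hT.mem_iff.mp hu with rfl | rfl | rfl <;> rcases hT.mem_iff.mp hv with rfl | rfl | rfl
    · exact .inl (by rw [pow_three', ← he, inv_mul_cancel])
    · exact absurd (hpow hT.mem₂ (eq_inv_mul_of_mul_eq he.symm ▸ hx2)) hT.ne₁₂.symm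
    · exact absurd (hpow hT.mem₃ (eq_inv_mul_of_mul_eq he.symm ▸ hx2)) hT.ne₁₃.symm
    · exact absurd (hpow hT.mem₂ (eq_mul_inv_of_mul_eq he.symm ▸ hx2)) hT.ne₁₂.symm
    · exact absurd (hT.eq_of_mem_zpowers hx hT.mem₂ (inv_eq_iff_eq_inv.mp he ▸ hsq_mem)
        (mem_zpowers _)) hT.ne₁₂
    · exact .inr (.inl (by rw [mul_assoc, ← he, mul_inv_cancel]))
    · exact absurd (hpow hT.mem₃ (eq_mul_inv_of_mul_eq he.symm ▸ hx2)) hT.ne₁₃.symm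
    · exact .inr (.inr (by rw [mul_assoc, ← he, mul_inv_cancel]))
    · exact absurd (hT.eq_of_mem_zpowers hx hT.mem₃ (inv_eq_iff_eq_inv.mp he ▸ hsq_mem)
        (mem_zpowers _)) hT.ne₁₃
  · exact absurd (show x * u = v by rw [← inv_inv x, he]; group ▸ hv) (hT.lmpf.1 x hx u hu)
  · exact absurd (show v * x = u by rw [← inv_inv x, he]; group ▸ hu) (hT.lmpf.1 v hv x hx)

theorem pow_three_eq_one_of_ne (hT : IsLMPFTriple S x y z) (hxyz : x * y * z ≠ 1)
    (hxzy : x * z * y ≠ 1) : ∀ s ∈ S, s ^ 3 = 1 := by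
  intro s hs
  rcases hT.mem_iff.mp hs with rfl | rfl | rfl
  · exact hT.pow_three_eq_one_or.resolve_right (by rintro (h | h) <;> contradiction)
  · rcases hT.rotate.pow_three_eq_one_or with h | h | h
    · exact h
    · exact absurd (mul_mul_eq_one_rotate (mul_mul_eq_one_rotate h)) hxyz
    · exact absurd (mul_mul_eq_one_rotate h) hxzy
  · rcases hT.rotate.rotate.pow_three_eq_one_or with h | h | h
    · exact h
    · exact absurd (mul_mul_eq_one_rotate h) hxyz
    · exact absurd (mul_mul_eq_one_rotate (mul_mul_eq_one_rotate h)) hxzy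

theorem false_of_inv_mul_sq_eq (hT : IsLMPFTriple S x y z) (hnc : ¬ ∀ a b : G, a * b = b * a)
    (h₁ : (x * y)⁻¹ * (x * y)⁻¹ = z) (h₂ : (y * x)⁻¹ * (y * x)⁻¹ = z) : False := by
  have hsq : (x * y) * (x * y) = (y * x) * (y * x) := by
    have := h₁.trans h₂.symm
    rwa [← mul_inv_rev, ← mul_inv_rev, inv_inj] at this
  have hxz : Commute x z := by
    rw [← h₁, ← mul_inv_rev]
    refine Commute.inv_right ?_
    show x * ((x * y) * (x * y)) = ((x * y) * (x * y)) * x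
    nth_rewrite 1 [hsq]
    group
  exact hnc (mul_comm_of_closure_pair_eq_top (hT.closure_pair x hT.mem₁ z hT.mem₃ hT.ne₁₃) hxz)

theorem inv_mul_eq_of_inv_mul_sq_eq (hnc : ¬ ∀ a b : G, a * b = b * a) {u₁ v₁ u₂ v₂ w : G}
    (hT₁ : IsLMPFTriple S u₁ v₁ w) (hT₂ : IsLMPFTriple S u₂ v₂ w)
    (h₁ : (u₁ * v₁)⁻¹ * (u₁ * v₁)⁻¹ = w) (h₂ : (u₂ * v₂)⁻¹ * (u₂ * v₂)⁻¹ = w) :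
    (u₁ * v₁)⁻¹ = (u₂ * v₂)⁻¹ := by
  rcases hT₁.mem_iff.mp hT₂.mem₁ with rfl | rfl | rfl <;>
    rcases hT₁.mem_iff.mp hT₂.mem₂ with rfl | rfl | rfl <;>
    first
    | rfl
    | exact absurd rfl hT₂.ne₁₂ | exact absurd rfl hT₂.ne₁₃ | exact absurd rfl hT₂.ne₂₃
    | exact (hT₁.false_of_inv_mul_sq_eq hnc h₁ h₂).elim

theorem exists_of_notMem_of_pow_three_eq_one (hT : IsLMPFTriple S x y z)
    (hcube : ∀ s ∈ S, s ^ 3 = 1) {g : G} (hg : g ∉ shortProducts x y z) :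
    ∃ u v w, IsLMPFTriple S u v w ∧ g = (u * v)⁻¹ ∧ g * g = w := by
  obtain ⟨hgg, u, hu, v, hv, rfl⟩ := hT.exists_eq_inv_mul_of_notMem hg
  obtain huv | rfl := ne_or_eq u v
  · obtain ⟨w, hT'⟩ := hT.exists_isLMPFTriple_of_ne hu hv huv
    exact ⟨u, v, w, hT', rfl, hT'.inv_mul_sq_eq_of_mem hgg⟩
  · refine absurd (mem_shortProducts hT.eq (.inl ?_)) hg
    rwa [inv_eq_of_mul_eq_one_right (by rw [← pow_three', hcube u hu])]

theorem card_le_of_pow_three_eq_one [Fintype G] (hT : IsLMPFTriple S x y z)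
    (hnc : ¬ ∀ a b : G, a * b = b * a) (hcube : ∀ s ∈ S, s ^ 3 = 1) : Nat.card G ≤ 24 := by
  classical
  set L := shortProducts x y z
  have hout {g : G} (hg : g ∉ L) := hT.exists_of_notMem_of_pow_three_eq_one hcube hg
  by_contra! hN
  have h26 := twenty_six_le_natCard hnc hN
  obtain ⟨g, hg⟩ : ∃ g, g ∉ L := by
    by_contra! hall
    have := Nat.card_le_length_of_forall_mem L hall
    simp only [L, shortProducts, List.length_cons, List.length_nil] at this
    omega
  obtain ⟨u, v, w, hT', rfl, hw⟩ := hout hg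
  have h6 : 6 ∣ Nat.card G := by
    refine six_dvd_natCard_of_mul_self_eq hw (hcube w hT'.mem₃) (hT'.ne_one hT'.mem₃)
      fun h3 => hg ?_
    have : (u * v)⁻¹ = w * w := by
      rw [← hw]
      calc (u * v)⁻¹ = (u * v)⁻¹ ^ 3 * (u * v)⁻¹ := by rw [h3, one_mul]
        _ = _ := by simp only [pow_succ, pow_zero, one_mul]; group
    rw [this]
    exact mem_shortProducts hT.eq (.inr ⟨w, hT'.mem₃, w, hT'.mem₃, .inl rfl⟩)
  have h28 : Nat.card G ≤ 28 := by
    refine (Nat.card_le_length_add_card_of_injOn L {x, y, z} (fun g => g * g) ?_ ?_).trans ?_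
    · intro g hg
      obtain ⟨u, v, w, hT', -, hw⟩ := hout hg
      simpa [hw] using hT.mem_iff.mp hT'.mem₃
    · intro g₁ hg₁ g₂ hg₂ he
      obtain ⟨u₁, v₁, w₁, hT₁, rfl, hw₁⟩ := hout hg₁
      obtain ⟨u₂, v₂, w₂, hT₂, rfl, rfl⟩ := hout hg₂
      obtain rfl : w₁ = _ := hw₁.symm.trans he
      exact inv_mul_eq_of_inv_mul_sq_eq hnc hT₁ hT₂ hw₁ rfl
    · have := Finset.card_le_three (a := x) (b := y) (c := z)
      simp only [L, shortProducts, List.length_cons, List.length_nil]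
      omega
  omega

theorem inv_mul_sq_notMem_of_mul_mul_eq_one (hT : IsLMPFTriple S x y z) (hxyz : x * y * z = 1)
    (hN : Nat.gcd (Nat.card G) (2 ^ Nat.card G - 1) ∣ 3) : (y * x)⁻¹ * (y * x)⁻¹ ∉ S := by
  intro hmem
  have hz : (y * x)⁻¹ * (y * x)⁻¹ = z := hT.swap.inv_mul_sq_eq_of_mem hmem
  have hconj : x * (y * x) * x⁻¹ = (y * x) ^ 2 := by
    rw [show x * (y * x) * x⁻¹ = x * y by group, sq, ← inv_inv (y * x * (y * x)), mul_inv_rev, hz,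
      eq_inv_of_mul_eq_one_right hxyz, inv_inv]
  have hr : orderOf (y * x) ∣ 3 :=
    (Nat.dvd_gcd (_root_.orderOf_dvd_natCard _) ((orderOf_dvd_pow_orderOf_sub_one hconj).trans
      (Nat.pow_sub_one_dvd_pow_sub_one 2 (_root_.orderOf_dvd_natCard x)))).trans hN
  rcases (Nat.dvd_prime Nat.prime_three).mp hr with h1 | h3
  · have : y = x⁻¹ := eq_inv_of_mul_eq_one_left (orderOf_eq_one_iff.mp h1)
    exact hT.ne₁₂ (hT.eq_of_mem_zpowers hT.mem₁ hT.mem₂ (mem_zpowers x)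
      (this ▸ inv_mem (mem_zpowers x)))
  · have : (y * x)⁻¹ * (y * x)⁻¹ = y * x := by
      have h3' : (y * x) ^ 3 = 1 := h3 ▸ pow_orderOf_eq_one (y * x)
      rw [← one_mul ((y * x)⁻¹ * (y * x)⁻¹), ← h3']
      simp only [pow_succ, pow_zero, one_mul]
      group
    exact hT.lmpf.1 y hT.mem₂ x hT.mem₁ (this ▸ hz ▸ hT.mem₃)

theorem inv_mul_self_sq_notMem (hT : IsLMPFTriple S x y z) (hN : ¬ 5 ∣ Nat.card G) {u : G}
    (hu : u ∈ S) : (u * u)⁻¹ * (u * u)⁻¹ ∉ S := by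
  intro hmem
  have h : (u * u)⁻¹ * (u * u)⁻¹ = u :=
    hT.eq_of_mem_zpowers hmem hu (mem_zpowers_iff.mpr ⟨-4, by group⟩) (mem_zpowers u)
  have : Fact (Nat.Prime 5) := ⟨by norm_num⟩
  have h5 : orderOf u = 5 := by
    refine orderOf_eq_prime ?_ (hT.ne_one hu)
    calc u ^ 5 = (u * u) * (u * u) * u := by simp only [pow_succ, pow_zero, one_mul, mul_assoc]
      _ = (u * u) * (u * u) * ((u * u)⁻¹ * (u * u)⁻¹) := by rw [h]
      _ = 1 := by group
  exact hN (h5 ▸ _root_.orderOf_dvd_natCard u)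

theorem eq_of_notMem_of_mul_mul_eq_one (hT : IsLMPFTriple S x y z) (hxyz : x * y * z = 1)
    {g : G} (hg : g ∉ shortProducts x y z) :
    g * g ∈ S ∧ (g = (x * x)⁻¹ ∨ g = (y * y)⁻¹ ∨ g = (z * z)⁻¹ ∨
      g = (y * x)⁻¹ ∨ g = (z * y)⁻¹ ∨ g = (x * z)⁻¹) := by
  have hyzx := mul_mul_eq_one_rotate hxyz
  have hzxy := mul_mul_eq_one_rotate hyzx
  obtain ⟨hgg, u, hu, v, hv, rfl⟩ := hT.exists_eq_inv_mul_of_notMem hg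
  have hL {s : G} (hs : s ∈ S) : s ∉ shortProducts x y z → False :=
    absurd (mem_shortProducts hT.eq (.inl hs))
  refine ⟨hgg, ?_⟩
  rcases hT.mem_iff.mp hu with rfl | rfl | rfl <;>
    rcases hT.mem_iff.mp hv with rfl | rfl | rfl <;>
    first
    | simp only [true_or, or_true]
    | exact (hL hT.mem₃ (eq_inv_of_mul_eq_one_right hxyz ▸ hg)).elim
    | exact (hL hT.mem₁ (eq_inv_of_mul_eq_one_right hyzx ▸ hg)).elim
    | exact (hL hT.mem₂ (eq_inv_of_mul_eq_one_right hzxy ▸ hg)).elim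

theorem card_le_of_mul_mul_eq_one (hT : IsLMPFTriple S x y z)
    (hnc : ¬ ∀ a b : G, a * b = b * a) (hxyz : x * y * z = 1) : Nat.card G ≤ 24 := by
  set L := shortProducts x y z
  have hout {g : G} (hg : g ∉ L) := hT.eq_of_notMem_of_mul_mul_eq_one hxyz hg
  by_contra! hN
  have h26 := twenty_six_le_natCard hnc hN
  have h31 : Nat.card G ≤ 31 := by
    refine (Nat.card_le_length_of_forall_mem
      (L ++ [(x * x)⁻¹, (y * y)⁻¹, (z * z)⁻¹, (y * x)⁻¹, (z * y)⁻¹, (x * z)⁻¹]) fun g => ?_).trans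
      (by simp [L, shortProducts])
    by_cases hg : g ∈ L
    · exact List.mem_append_left _ hg
    rcases (hout hg).2 with rfl | rfl | rfl | rfl | rfl | rfl <;> simp
  have hgcd := Nat.gcd_two_pow_sub_one_dvd_three h26 h31
  have hout' : ∀ g ∉ L, g * g ∈ S ∧ (g = (x * x)⁻¹ ∨ g = (y * y)⁻¹ ∨ g = (z * z)⁻¹) := by
    intro g hg
    obtain ⟨hgg, hsq | hsq | hsq | rfl | rfl | rfl⟩ := hout hg
    · exact ⟨hgg, .inl hsq⟩
    · exact ⟨hgg, .inr (.inl hsq)⟩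
    · exact ⟨hgg, .inr (.inr hsq)⟩
    · exact absurd hgg (hT.inv_mul_sq_notMem_of_mul_mul_eq_one hxyz hgcd)
    · exact absurd hgg (hT.rotate.inv_mul_sq_notMem_of_mul_mul_eq_one
        (mul_mul_eq_one_rotate hxyz) hgcd)
    · exact absurd hgg (hT.rotate.rotate.inv_mul_sq_notMem_of_mul_mul_eq_one
        (mul_mul_eq_one_rotate (mul_mul_eq_one_rotate hxyz)) hgcd)
  have h28 : Nat.card G ≤ 28 := by
    refine (Nat.card_le_length_of_forall_mem (L ++ [(x * x)⁻¹, (y * y)⁻¹, (z * z)⁻¹])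
      fun g => ?_).trans (by simp [L, shortProducts])
    by_cases hg : g ∈ L
    · exact List.mem_append_left _ hg
    rcases (hout' g hg).2 with rfl | rfl | rfl <;> simp
  have h25 : Nat.card G ≤ 25 := by
    refine (Nat.card_le_length_of_forall_mem L fun g => ?_).trans (by simp [L, shortProducts])
    by_contra hg
    have h5 : ¬ 5 ∣ Nat.card G := by omega
    obtain ⟨hgg, rfl | rfl | rfl⟩ := hout' g hg
    · exact hT.inv_mul_self_sq_notMem h5 hT.mem₁ hgg
    · exact hT.inv_mul_self_sq_notMem h5 hT.mem₂ hgg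
    · exact hT.inv_mul_self_sq_notMem h5 hT.mem₃ hgg
  omega

end IsLMPFTriple

end Triple

section Abelian

open scoped Finset

variable {G : Type*} [CommGroup G] {S : Set G} {x y z : G}

def abelianProducts (x y z : G) : List G :=
  [1, x, y, z, x * x, x * y, x * z, y * y, y * z, z * z,
    x * y⁻¹, x * z⁻¹, y * x⁻¹, y * z⁻¹, z * x⁻¹, z * y⁻¹]

theorem mem_abelianProducts {g : G} (hg : g ∈ shortProducts x y z) :
    g ∈ abelianProducts x y z := by
  revert g
  simp [shortProducts, abelianProducts, mul_comm]

theorem card_sq_eq_le_two [Fintype G] [DecidableEq G] [IsCyclic G] (s : G) :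
    #{g | g ^ 2 = s} ≤ 2 := by
  by_cases hs : s ∈ Set.range (powMonoidHom 2 : G →* G)
  · have := MonoidHom.card_fiber_eq_of_mem_range (powMonoidHom 2 : G →* G) hs ⟨1, one_pow 2⟩
    simp only [powMonoidHom_apply] at this
    exact this ▸ IsCyclic.card_pow_eq_one_le two_pos
  · simp only [Set.mem_range, powMonoidHom_apply, not_exists] at hs
    simp [Finset.filter_false_of_mem fun g _ => hs g]

theorem card_le_of_isCyclic [Fintype G] [IsCyclic G] (h : locallyMaximalPF S)
    (hS : S = {x, y, z}) : Nat.card G ≤ 22 := by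
  classical
  set A := (abelianProducts x y z).toFinset
  set B := ({x, y, z} : Finset G).biUnion fun s => {g | g ^ 2 = s}
  have hcov : ∀ g, g ∈ A ∪ B := by
    intro g
    rcases h.mem_shortProducts_or_mul_self_mem hS g with hg | hg
    · exact Finset.mem_union_left _ (List.mem_toFinset.mpr (mem_abelianProducts hg))
    · refine Finset.mem_union_right _ ?_
      rw [hS] at hg
      simpa [B, sq] using hg
  calc Nat.card G = #(Finset.univ : Finset G) := by simp
    _ ≤ #(A ∪ B) := Finset.card_le_card fun g _ => hcov g
    _ ≤ #A + #B := Finset.card_union_le A B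
    _ ≤ 16 + 3 * 2 := add_le_add ((List.toFinset_card_le _).trans (by simp [abelianProducts]))
        ((Finset.card_biUnion_le_card_mul _ _ 2 fun s _ => card_sq_eq_le_two s).trans
          (Nat.mul_le_mul_right 2 Finset.card_le_three))

theorem IsLMPFTriple.card_le_of_commGroup (hT : IsLMPFTriple S x y z) : Nat.card G ≤ 22 := by
  refine (Nat.card_le_length_of_forall_mem (abelianProducts x y z ++
    [(x * x)⁻¹, (y * y)⁻¹, (z * z)⁻¹, (x * y)⁻¹, (x * z)⁻¹, (y * z)⁻¹]) fun g => ?_).trans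
    (by simp [abelianProducts])
  by_cases hg : g ∈ shortProducts x y z
  · exact List.mem_append_left _ (mem_abelianProducts hg)
  obtain ⟨-, u, hu, v, hv, rfl⟩ := hT.exists_eq_inv_mul_of_notMem hg
  apply List.mem_append_right
  rcases hT.mem_iff.mp hu with rfl | rfl | rfl <;> rcases hT.mem_iff.mp hv with rfl | rfl | rfl <;>
    simp [mul_comm]

end Abelian

theorem stmt14 {G : Type*} [Group G] [Fintype G] (S : Set G) (hcard : S.ncard = 3)
    (h : locallyMaximalPF S)
    (hgen : ∀ x ∈ S, ∀ y ∈ S, x ≠ y → Subgroup.closure {x, y} = Subgroup.closure S)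
    (hinv : ∀ s ∈ S, orderOf s ≠ 2) :
    Nat.card G ≤ 24 := by
  obtain ⟨x, y, z, hxy, hxz, hyz, hS⟩ := Set.ncard_eq_three.mp hcard
  have hsq := h.1.mul_self_ne_one hinv
  by_cases hcyc : IsCyclic G
  · let _ : CommGroup G := IsCyclic.commGroup
    exact (card_le_of_isCyclic h hS).trans (by norm_num)
  have htop := closure_eq_top_of_ncard_eq_three h hcard hsq hgen
  have hT : IsLMPFTriple S x y z :=
    ⟨h, hS, hxy, hxz, hyz, hsq, fun p hp q hq hpq => (hgen p hp q hq hpq).trans htop, hcyc⟩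
  by_cases hcomm : ∀ a b : G, a * b = b * a
  · let _ : CommGroup G := { mul_comm := hcomm }
    exact hT.card_le_of_commGroup.trans (by norm_num)
  by_cases hxyz : x * y * z = 1
  · exact hT.card_le_of_mul_mul_eq_one hcomm hxyz
  by_cases hxzy : x * z * y = 1
  · exact hT.swap.rotate.card_le_of_mul_mul_eq_one hcomm hxzy
  exact hT.card_le_of_pow_three_eq_one hcomm (hT.pow_three_eq_one_of_ne hxyz hxzy)
end

section
/- Suppose S = {a, b, c} is a locally maximal product-free set of size 3 in a finite group G such that every 2-element subset of S generates ⟨S⟩, c is an involution, and a, b are not involutions. Then either |G| ≤ 24, or both a and b have order 3. -/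
open scoped Pointwise

/-!
Local maximality of `S` means that every `x ∉ S` other than `1` lies in `S * S`, `S * S⁻¹` or
`S⁻¹ * S`, or has `x * x ∈ S`. Applied to `a⁻¹` (where, after swapping `a` and `b`, `a` has order
at least 4) this forces `b = a⁻¹`, `b = a⁻²` or `a = b⁻²`. The pair `{a, b}` then generates a
cyclic group `⟨g⟩` containing the involution `c`, so `c = g ^ m` with `orderOf g = 2 * m` and `S`
is `{g, g⁻¹, g ^ m}` or `{g, g⁻², g ^ m}`.

Every subgroup containing `S` contains all squares, hence `⟨g⟩` is normal and `x * x ∈ S` for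
`x ∉ ⟨g⟩`. Product-freeness and the covering property, read on exponents modulo `2 * m`, leave
`m ∈ {3, 4}` for the first shape and `m ∈ {5, 6}` for the second. For `m = 4, 5, 6`, comparing
the squares of `x * g ^ i` shows that every `x ∉ ⟨g⟩` inverts `g`, so `⟨g⟩` has index at most 2
and `|G| ≤ 4 * m ≤ 24`. For `m = 3`, `G ⧸ ⟨g⟩` is a 2-group; in a Sylow 2-subgroup `P` every
element other than `1` and `c = g ^ 3` squares to `c`, which bounds `|P|` by 8, and
`|G| = 3 * |P|`.
-/

section

open Subgroup

-- Lets `omega` handle divisibility by a modulus that is not a numeral.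
theorem Nat.eq_zero_or_eq_or_two_mul_le_of_dvd {n k : ℕ} (h : n ∣ k) :
    k = 0 ∨ k = n ∨ 2 * n ≤ k := by
  by_cases hk : k = 0
  · exact Or.inl hk
  by_cases hlt : k < 2 * n
  · exact Or.inr (Or.inl (Nat.eq_of_dvd_of_lt_two_mul hk h hlt))
  · omega

variable {G : Type*} [Group G]

namespace Subgroup

theorem normal_of_forall_mul_self_mem {H : Subgroup G} (h : ∀ x, x * x ∈ H) : H.Normal where
  conj_mem n hn x := by
    have key : x * n * x⁻¹ = x * n * (x * n) * n⁻¹ * (x * x)⁻¹ := by group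
    rw [key]
    exact H.mul_mem (H.mul_mem (h _) (H.inv_mem hn)) (H.inv_mem (h x))

theorem index_le_two_of_forall_mul_mem {H : Subgroup G}
    (h : ∀ x y, x ∉ H → y ∉ H → x * y ∈ H) : H.index ≤ 2 := by
  by_cases hH : H = ⊤
  · simp [hH]
  obtain ⟨a, ha⟩ : ∃ a, a ∉ H := by simpa [eq_top_iff'] using hH
  exact (index_eq_two_iff_exists_notMem_and'.2
    ⟨a, ha, fun b => or_iff_not_imp_right.2 (h a b ha)⟩).le

end Subgroup

theorem card_le_two_mul_orderOf_of_forall_conj_eq_inv {g : G} (hg : g * g ≠ 1)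
    (hinv : ∀ x ∉ zpowers g, x * g * x⁻¹ = g⁻¹) : Nat.card G ≤ 2 * orderOf g := by
  have hindex : (zpowers g).index ≤ 2 := index_le_two_of_forall_mul_mem fun x y hx hy => by
    by_contra hxy
    have hg' : g⁻¹ = g := calc
      g⁻¹ = x * y * g * (x * y)⁻¹ := (hinv _ hxy).symm
      _ = (x * (y * g * y⁻¹)⁻¹ * x⁻¹)⁻¹ := by group
      _ = g := by rw [hinv y hy, inv_inv, hinv x hx, inv_inv]
    exact hg (mul_eq_one_iff_eq_inv.2 hg'.symm)
  rw [← card_mul_index (zpowers g), Nat.card_zpowers, mul_comm]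
  exact Nat.mul_le_mul_right _ hindex

theorem exists_orderOf_eq_two_mul_of_mem_zpowers [Finite G] {g c : G} (hcg : c ∈ zpowers g)
    (hc : c * c = 1) (hc1 : c ≠ 1) : ∃ m : ℕ, orderOf g = 2 * m ∧ c = g ^ m := by
  obtain ⟨k, rfl⟩ : ∃ k : ℕ, g ^ k = c := mem_powers_iff_mem_zpowers.2 hcg
  rw [← pow_mod_orderOf] at hc hc1 ⊢
  set j := k % orderOf g
  have hj : j ≠ 0 := by rintro hj; simp [hj] at hc1
  have hdvd : orderOf g ∣ 2 * j := orderOf_dvd_of_pow_eq_one (by rwa [two_mul, pow_add])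
  have hlt : j < orderOf g := Nat.mod_lt _ (orderOf_pos g)
  exact ⟨j, (Nat.eq_of_dvd_of_lt_two_mul (by omega) hdvd (by omega)).symm, rfl⟩

theorem Sylow.index_dvd_of_card_eq [Finite G] {p j r : ℕ} [Fact p.Prime] (P : Sylow p G)
    (h : Nat.card G = p ^ j * r) : P.index ∣ r :=
  (Nat.Coprime.pow_right j ((Nat.Prime.coprime_iff_not_dvd Fact.out).2 P.not_dvd_index).symm
    ).dvd_of_dvd_mul_left (h ▸ P.index_dvd_card)

theorem card_le_eight_of_forall_mul_self_eq [Finite G] {c : G} (hc : c * c = 1) (hc1 : c ≠ 1)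
    (hsq : ∀ x, x ≠ 1 → x ≠ c → x * x = c) : Nat.card G ≤ 8 := by
  by_cases hx : ∃ x : G, x ≠ 1 ∧ x ≠ c
  · obtain ⟨x, hx1, hxc⟩ := hx
    have hxx := hsq x hx1 hxc
    have hsq' : ∀ y ∉ zpowers x, y * y = c := fun y hy =>
      hsq y (fun e => hy (e ▸ one_mem _))
        (fun e => hy (e ▸ hxx ▸ mul_mem (mem_zpowers x) (mem_zpowers x)))
    have hinv : ∀ y ∉ zpowers x, y * x * y⁻¹ = x⁻¹ := by
      intro y hy
      have hxy : x * y ∉ zpowers x := fun hm =>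
        hy (by simpa using mul_mem (inv_mem (mem_zpowers x)) hm)
      have hxyx : x * y * x = y := mul_right_cancel (b := y) <| by
        simpa only [mul_assoc, hsq' y hy] using hsq' _ hxy
      calc y * x * y⁻¹ = x⁻¹ * (x * y * x) * y⁻¹ := by group
        _ = x⁻¹ := by rw [hxyx]; group
    calc Nat.card G ≤ 2 * orderOf x :=
          card_le_two_mul_orderOf_of_forall_conj_eq_inv (hxx ▸ hc1) hinv
      _ ≤ 2 * 4 := by
          gcongr
          exact orderOf_le_of_pow_eq_one (by norm_num)
            (by rw [show 4 = 2 + 2 from rfl, pow_add, sq, hxx, hc])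
  · push Not at hx
    have hsurj : Function.Surjective fun b : Bool => if b then c else 1 := fun y => by
      by_cases hy : y = 1
      · exact ⟨false, hy.symm⟩
      · exact ⟨true, (hx y hy).symm⟩
    exact (Nat.card_le_card_of_surjective _ hsurj).trans (by simp)

namespace productFree

variable {S : Set G}

theorem one_notMem_s15 (h : productFree S) : (1 : G) ∉ S :=
  fun h1 => h 1 h1 1 h1 (by rwa [one_mul])

theorem inv_notMem_mul_inv (h : productFree S) {a : G} (ha : a ∈ S) : a⁻¹ ∉ S * S⁻¹ := by
  intro hmem
  obtain ⟨s, hs, t, ht, e⟩ := Set.mem_mul.1 hmem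
  have has : a * s = t⁻¹ := eq_inv_of_mul_eq_one_left (by rw [mul_assoc, e, mul_inv_cancel])
  exact h a ha s hs (has ▸ Set.mem_inv.1 ht)

theorem inv_notMem_inv_mul (h : productFree S) {a : G} (ha : a ∈ S) : a⁻¹ ∉ S⁻¹ * S := by
  intro hmem
  obtain ⟨s, hs, t, ht, e⟩ := Set.mem_mul.1 hmem
  have hta : s⁻¹ = t * a := mul_eq_one_iff_inv_eq.1 (by rw [← mul_assoc, e, inv_mul_cancel])
  exact h t ht a ha (hta ▸ Set.mem_inv.1 hs)

theorem ne_of_mul_eq_inv (h : productFree S) {a c s t : G} (hc : c * c = 1) (ha : a ∈ S)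
    (hs : s ∈ S) (ht : t ∈ S) (e : s * t = a⁻¹) : s ≠ c ∧ t ≠ c := by
  have hc' : c⁻¹ = c := inv_eq_of_mul_eq_one_left hc
  constructor
  · rintro rfl
    exact h t ht a ha (by rwa [eq_inv_mul_of_mul_eq e, inv_mul_cancel_right, hc'])
  · rintro rfl
    exact h a ha s hs (by rwa [eq_mul_inv_of_mul_eq e, mul_inv_cancel_left, hc'])

theorem not_orderOf_dvd_add_sub {g : G} {E : Set ℤ} (h : productFree ((g ^ · : ℤ → G) '' E))
    {p q r : ℤ} (hp : p ∈ E) (hq : q ∈ E) (hr : r ∈ E) : ¬(orderOf g : ℤ) ∣ p + q - r :=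
  fun hd => h _ (Set.mem_image_of_mem _ hp) _ (Set.mem_image_of_mem _ hq) <| by
    rw [← zpow_add, orderOf_dvd_sub_iff_zpow_eq_zpow.1 hd]
    exact Set.mem_image_of_mem _ hr

end productFree

namespace locallyMaximalPF

variable {S : Set G} {g : G} {E : Set ℤ}

theorem covers (h : locallyMaximalPF S) (x : G) :
    x = 1 ∨ x ∈ S ∨ x ∈ S * S ∨ x ∈ S * S⁻¹ ∨ x ∈ S⁻¹ * S ∨ x * x ∈ S := by
  by_contra! hx
  obtain ⟨hx1, hxS, hSS, hSS', hS'S, hsq⟩ := hx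
  have h1 := h.1.one_notMem_s15
  have hpf : productFree (insert x S) := by
    rintro u (rfl | hu) v (rfl | hv) huv <;> rcases huv with huv | huv
    · exact hx1 (mul_eq_left.1 huv)
    · exact hsq huv
    · exact h1 (mul_eq_left.1 huv ▸ hv)
    · exact hSS' (by simpa using Set.mul_mem_mul huv (Set.inv_mem_inv.2 hv))
    · exact h1 (mul_eq_right.1 huv ▸ hu)
    · exact hS'S (by simpa using Set.mul_mem_mul (Set.inv_mem_inv.2 hu) huv)
    · exact hSS (huv ▸ Set.mul_mem_mul hu hv)
    · exact h.1 u hu v hv huv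
  exact hxS (h.2 _ hpf (Set.subset_insert x S) ▸ Set.mem_insert x S)

theorem mul_self_mem_of_notMem (h : locallyMaximalPF S) {H : Subgroup G} (hSH : S ⊆ H) {x : G}
    (hx : x ∉ H) : x * x ∈ S := by
  have hS'H : S⁻¹ ⊆ H := fun s hs => inv_mem_iff.1 (hSH hs)
  rcases h.covers x with rfl | hS | ⟨s, hs, t, ht, rfl⟩ | ⟨s, hs, t, ht, rfl⟩ |
    ⟨s, hs, t, ht, rfl⟩ | hsq
  · exact absurd H.one_mem hx
  · exact absurd (hSH hS) hx
  · exact absurd (H.mul_mem (hSH hs) (hSH ht)) hx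
  · exact absurd (H.mul_mem (hSH hs) (hS'H ht)) hx
  · exact absurd (H.mul_mem (hS'H hs) (hSH ht)) hx
  · exact hsq

theorem mul_self_mem (h : locallyMaximalPF S) {H : Subgroup G} (hSH : S ⊆ H) (x : G) :
    x * x ∈ H := by
  by_cases hx : x ∈ H
  · exact H.mul_mem hx hx
  · exact hSH (h.mul_self_mem_of_notMem hSH hx)

theorem eq_inv_or_eq_inv_sq_or_eq_inv_sq {a b c : G}
    (h : locallyMaximalPF {a, b, c}) (hc : c * c = 1) (ha : 4 ≤ orderOf a) :
    b = a⁻¹ ∨ b = a⁻¹ ^ 2 ∨ a = b⁻¹ ^ 2 := by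
  have hpf := h.1
  have haS : a ∈ ({a, b, c} : Set G) := by simp
  have hcS : c ∈ ({a, b, c} : Set G) := by simp
  have hc' : c⁻¹ = c := inv_eq_of_mul_eq_one_left hc
  have ha1 : a ≠ 1 := pow_one a ▸ pow_ne_one_of_lt_orderOf one_ne_zero (by omega)
  have ha2 : a * a ≠ 1 := sq a ▸ pow_ne_one_of_lt_orderOf two_ne_zero (by omega)
  have ha3 : a * a * a ≠ 1 := by
    rw [← sq, ← pow_succ]; exact pow_ne_one_of_lt_orderOf three_ne_zero (by omega)
  suffices key : b = a⁻¹ ∨ b = a⁻¹ * a⁻¹ ∨ b * b = a⁻¹ by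
    rcases key with e | e | e
    · exact Or.inl e
    · exact Or.inr (Or.inl (e.trans (sq _).symm))
    · exact Or.inr (Or.inr (by rw [sq, ← mul_inv_rev, e, inv_inv]))
  rcases h.covers a⁻¹ with h1 | hS | hSS | hSS' | hS'S | hsq
  · exact absurd (inv_eq_one.1 h1) ha1
  · simp only [Set.mem_insert_iff, Set.mem_singleton_iff] at hS
    rcases hS with e | e | e
    · exact absurd (mul_eq_one_iff_eq_inv.2 e.symm) ha2
    · exact Or.inl e.symm
    · exact absurd (by rw [inv_eq_iff_eq_inv.1 e, hc', hc]) ha2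
  · obtain ⟨s, hs, t, ht, e⟩ := Set.mem_mul.1 hSS
    obtain ⟨hsc, htc⟩ := hpf.ne_of_mul_eq_inv hc haS hs ht e
    simp only [Set.mem_insert_iff, Set.mem_singleton_iff, hsc, htc, or_false] at hs ht
    rcases hs with rfl | rfl <;> rcases ht with rfl | rfl
    · exact absurd (by rw [e, inv_mul_cancel]) ha3
    · exact Or.inr (Or.inl (eq_inv_mul_of_mul_eq e))
    · exact Or.inr (Or.inl (eq_mul_inv_of_mul_eq e))
    · exact Or.inr (Or.inr e)
  · exact absurd hSS' (hpf.inv_notMem_mul_inv haS)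
  · exact absurd hS'S (hpf.inv_notMem_inv_mul haS)
  · simp only [Set.mem_insert_iff, Set.mem_singleton_iff] at hsq
    rcases hsq with e | e | e
    · exact absurd (by nth_rw 3 [← e]; group) ha3
    · exact Or.inr (Or.inl e.symm)
    · have hac : a * a = c := by rw [← hc', ← e, mul_inv_rev, inv_inv]
      exact (hpf a haS a haS (hac ▸ hcS)).elim

theorem covers_zpow (h : locallyMaximalPF ((g ^ · : ℤ → G) '' E)) (hE : E.Nonempty) (i : ℤ) :
    ∃ p ∈ E, ∃ q ∈ E, (orderOf g : ℤ) ∣ i - p ∨ (orderOf g : ℤ) ∣ i - (p + q) ∨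
      (orderOf g : ℤ) ∣ i - (p - q) ∨ (orderOf g : ℤ) ∣ 2 * i - p := by
  obtain ⟨p₀, hp₀⟩ := hE
  simp only [orderOf_dvd_sub_iff_zpow_eq_zpow]
  rcases h.covers (g ^ i) with h1 | ⟨p, hp, e⟩ | hSS | hSS' | hS'S | ⟨p, hp, e⟩
  · exact ⟨p₀, hp₀, p₀, hp₀, Or.inr (Or.inr (Or.inl (by simp [h1])))⟩
  · exact ⟨p, hp, p, hp, Or.inl e.symm⟩
  · obtain ⟨_, ⟨p, hp, rfl⟩, _, ⟨q, hq, rfl⟩, e⟩ := Set.mem_mul.1 hSS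
    exact ⟨p, hp, q, hq, Or.inr (Or.inl (by rw [zpow_add]; exact e.symm))⟩
  · obtain ⟨_, ⟨p, hp, rfl⟩, t, ⟨q, hq, e'⟩, e⟩ := Set.mem_mul.1 hSS'
    dsimp only at e e'
    refine ⟨p, hp, q, hq, Or.inr (Or.inr (Or.inl ?_))⟩
    rw [zpow_sub, e', inv_inv, e]
  · obtain ⟨s, ⟨q, hq, e'⟩, _, ⟨p, hp, rfl⟩, e⟩ := Set.mem_mul.1 hS'S
    dsimp only at e e'
    refine ⟨p, hp, q, hq, Or.inr (Or.inr (Or.inl ?_))⟩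
    rw [← e, ← inv_inv s, ← e', ← zpow_neg, ← zpow_add, neg_add_eq_sub]
  · exact ⟨p, hp, p, hp, Or.inr (Or.inr (Or.inr (by rw [two_mul, zpow_add]; exact e.symm)))⟩

-- `x * x = g ^ σ`, and `(x * g ^ i) * (x * g ^ i) = g ^ ((t + 1) * i + σ)` is some `g ^ τ ∈ S`.
theorem exists_conj_eq_zpow (h : locallyMaximalPF ((g ^ · : ℤ → G) '' E)) {x : G}
    (hx : x ∉ zpowers g) :
    ∃ t : ℤ, x * g * x⁻¹ = g ^ t ∧
      ∃ σ ∈ E, ∀ i : ℤ, ∃ τ ∈ E, (orderOf g : ℤ) ∣ (t + 1) * i + σ - τ := by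
  have hSH : (g ^ · : ℤ → G) '' E ⊆ zpowers g :=
    Set.image_subset_iff.2 fun k _ => zpow_mem_zpowers g k
  have hN := normal_of_forall_mul_self_mem (h.mul_self_mem hSH)
  obtain ⟨t, ht⟩ := mem_zpowers_iff.1 (hN.conj_mem g (mem_zpowers g) x)
  obtain ⟨σ, hσ, hσx⟩ := h.mul_self_mem_of_notMem hSH hx
  refine ⟨t, ht.symm, σ, hσ, fun i => ?_⟩
  have hxi : x * g ^ i ∉ zpowers g := fun hm =>
    hx (by simpa using mul_mem hm (zpow_mem_zpowers g (-i)))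
  obtain ⟨τ, hτ, hτx⟩ := h.mul_self_mem_of_notMem hSH hxi
  dsimp only at hσx hτx
  refine ⟨τ, hτ, orderOf_dvd_sub_iff_zpow_eq_zpow.2 ?_⟩
  calc g ^ ((t + 1) * i + σ) = (g ^ t) ^ i * g ^ σ * g ^ i := by
        rw [← zpow_mul, ← zpow_add, ← zpow_add]; ring_nf
    _ = x * g ^ i * (x * g ^ i) := by rw [ht, hσx, conj_zpow]; group
    _ = g ^ τ := hτx.symm

-- `hE`: modulo `orderOf g`, no coset `σ + d ℤ` with `d ≢ 0` is contained in `E`.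
theorem card_le_two_mul_orderOf (h : locallyMaximalPF ((g ^ · : ℤ → G) '' E))
    (hE : ∀ d σ : ℤ, σ ∈ E → (∀ i, ∃ τ ∈ E, (orderOf g : ℤ) ∣ d * i + σ - τ) →
      (orderOf g : ℤ) ∣ d)
    (hg : g * g ≠ 1) : Nat.card G ≤ 2 * orderOf g := by
  refine card_le_two_mul_orderOf_of_forall_conj_eq_inv hg fun x hx => ?_
  obtain ⟨t, ht, σ, hσ, hi⟩ := h.exists_conj_eq_zpow hx
  rw [ht, ← zpow_neg_one]
  exact orderOf_dvd_sub_iff_zpow_eq_zpow.1 (by simpa using hE _ σ hσ hi)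

theorem not_five_le_of_eq_inv {m : ℕ}
    (h : locallyMaximalPF ((g ^ · : ℤ → G) '' {1, -1, (m : ℤ)})) (hm : orderOf g = 2 * m)
    (hm5 : 5 ≤ m) : False := by
  have hm6 : m = 6 := by
    obtain ⟨p, hp, q, hq, hd⟩ := h.covers_zpow (by simp) 3
    simp only [Set.mem_insert_iff, Set.mem_singleton_iff] at hp hq
    rcases hp with rfl | rfl | rfl <;> rcases hq with rfl | rfl | rfl <;>
      rcases hd with hd | hd | hd | hd <;>
      rcases Nat.eq_zero_or_eq_or_two_mul_le_of_dvd (Int.natCast_dvd.1 hd) with hd | hd | hd <;>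
      omega
  subst hm6
  have hn : (orderOf g : ℤ) = 12 := by rw [hm]; rfl
  obtain ⟨p, hp, q, hq, hd⟩ := h.covers_zpow (by simp) 4
  simp only [Set.mem_insert_iff, Set.mem_singleton_iff] at hp hq
  rw [hn] at hd
  rcases hp with rfl | rfl | rfl <;> rcases hq with rfl | rfl | rfl <;> omega

theorem eq_five_or_eq_six_of_eq_inv_sq {m : ℕ}
    (h : locallyMaximalPF ((g ^ · : ℤ → G) '' {1, -2, (m : ℤ)})) (hm : orderOf g = 2 * m)
    (hm5 : 5 ≤ m) : m = 5 ∨ m = 6 := by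
  have hm568 : m = 5 ∨ m = 6 ∨ m = 8 := by
    obtain ⟨p, hp, q, hq, hd⟩ := h.covers_zpow (by simp) 4
    simp only [Set.mem_insert_iff, Set.mem_singleton_iff] at hp hq
    rcases hp with rfl | rfl | rfl <;> rcases hq with rfl | rfl | rfl <;>
      rcases hd with hd | hd | hd | hd <;>
      rcases Nat.eq_zero_or_eq_or_two_mul_le_of_dvd (Int.natCast_dvd.1 hd) with hd | hd | hd <;>
      omega
  rcases hm568 with hm5 | hm6 | rfl
  · exact Or.inl hm5
  · exact Or.inr hm6
  have hn : (orderOf g : ℤ) = 16 := by rw [hm]; rfl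
  obtain ⟨p, hp, q, hq, hd⟩ := h.covers_zpow (by simp) 5
  simp only [Set.mem_insert_iff, Set.mem_singleton_iff] at hp hq
  rw [hn] at hd
  rcases hp with rfl | rfl | rfl <;> rcases hq with rfl | rfl | rfl <;> omega

variable [Finite G]

theorem mul_self_eq_of_mem_sylow (h : locallyMaximalPF ((g ^ · : ℤ → G) '' {1, -1, 3}))
    (hg : orderOf g = 6) (P : Sylow 2 G) {y : G} (hy : y ∈ P) (hy1 : y ≠ 1) (hyc : y ≠ g ^ 3) :
    y * y = g ^ 3 := by
  have hSH : (g ^ · : ℤ → G) '' {1, -1, 3} ⊆ zpowers g :=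
    Set.image_subset_iff.2 fun k _ => zpow_mem_zpowers g k
  have h3 : ∀ z ∈ P, ¬3 ∣ orderOf z := fun z hz h3 => by
    obtain ⟨l, hl⟩ := IsPGroup.iff_orderOf.1 P.isPGroup' ⟨z, hz⟩
    rw [Subgroup.orderOf_mk] at hl
    exact absurd (Nat.prime_three.dvd_of_dvd_pow (hl ▸ h3)) (by norm_num)
  by_cases hyN : y ∈ zpowers g
  · have hy2 : orderOf y ∣ 2 :=
      ((Nat.Prime.coprime_iff_not_dvd Nat.prime_three).2 (h3 y hy)).symm.dvd_of_dvd_mul_right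
        (by simpa [hg] using orderOf_dvd_of_mem_zpowers hyN)
    obtain ⟨m, hm, rfl⟩ := exists_orderOf_eq_two_mul_of_mem_zpowers hyN
      (by rw [← sq]; exact orderOf_dvd_iff_pow_eq_one.1 hy2) hy1
    exact absurd (by rw [show m = 3 by omega]) hyc
  · have hyy := h.mul_self_mem_of_notMem hSH hyN
    simp only [Set.image_insert_eq, Set.image_singleton, zpow_one, zpow_neg_one,
      Set.mem_insert_iff, Set.mem_singleton_iff] at hyy
    rcases hyy with e | e | e
    · exact absurd (e ▸ hg ▸ (by norm_num)) (h3 _ (mul_mem hy hy))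
    · exact absurd (e ▸ (orderOf_inv g).symm ▸ hg ▸ (by norm_num)) (h3 _ (mul_mem hy hy))
    · exact_mod_cast e

theorem card_le_of_eq_inv_of_orderOf_eq_six
    (h : locallyMaximalPF ((g ^ · : ℤ → G) '' {1, -1, 3})) (hg : orderOf g = 6) :
    Nat.card G ≤ 24 := by
  have hsq := h.mul_self_mem (Set.image_subset_iff.2 fun k _ => zpow_mem_zpowers g k)
  have := normal_of_forall_mul_self_mem hsq
  have hQ : IsPGroup 2 (G ⧸ zpowers g) := fun q => QuotientGroup.induction_on q fun x =>
    ⟨1, by rw [← QuotientGroup.mk_pow, QuotientGroup.eq_one_iff, pow_one, sq]; exact hsq x⟩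
  obtain ⟨k, hk⟩ := IsPGroup.iff_card.1 hQ
  have hG : Nat.card G = 2 ^ (k + 1) * 3 := by
    rw [card_eq_card_quotient_mul_card_subgroup (zpowers g), hk, Nat.card_zpowers, hg]; ring
  have hc : g ^ 3 * g ^ 3 = 1 := by
    rw [← pow_add, show 3 + 3 = orderOf g by omega, pow_orderOf_eq_one]
  have hc1 : g ^ 3 ≠ 1 := pow_ne_one_of_lt_orderOf (by norm_num) (by omega)
  obtain ⟨P, hP⟩ := IsPGroup.exists_le_sylow
    (IsPGroup.of_card (p := 2) (n := 1) (G := zpowers (g ^ 3))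
      (by rw [Nat.card_zpowers, pow_one]; exact orderOf_eq_prime (by rwa [sq]) hc1))
  have hP8 : Nat.card P ≤ 8 :=
    card_le_eight_of_forall_mul_self_eq (c := (⟨_, hP (mem_zpowers _)⟩ : P))
      (Subtype.ext hc) (fun e => hc1 (congrArg Subtype.val e)) fun y hy1 hyc =>
        Subtype.ext (h.mul_self_eq_of_mem_sylow hg P y.2 (fun e => hy1 (Subtype.ext e))
          (fun e => hyc (Subtype.ext e)))
  calc Nat.card G = Nat.card P * P.index := (card_mul_index _).symm
    _ ≤ 8 * 3 := Nat.mul_le_mul hP8 (Nat.le_of_dvd three_pos (P.index_dvd_of_card_eq hG))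

theorem card_le_of_eq_inv {m : ℕ}
    (h : locallyMaximalPF ((g ^ · : ℤ → G) '' {1, -1, (m : ℤ)})) (hm : orderOf g = 2 * m)
    (hg : 4 ≤ orderOf g) : Nat.card G ≤ 24 := by
  rcases (by omega : m = 2 ∨ m = 3 ∨ m = 4 ∨ 5 ≤ m) with rfl | rfl | rfl | hm5
  · exact absurd (by rw [hm]; norm_num)
      (h.1.not_orderOf_dvd_add_sub (p := 1) (q := 1) (r := 2) (by simp) (by simp) (by simp))
  · exact h.card_le_of_eq_inv_of_orderOf_eq_six hm
  · have hn : (orderOf g : ℤ) = 8 := by rw [hm]; rfl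
    refine (h.card_le_two_mul_orderOf (fun d σ hσ hi => ?_) ?_).trans (by omega)
    · obtain ⟨τ₁, h₁, d₁⟩ := hi 1
      obtain ⟨τ₂, h₂, d₂⟩ := hi 2
      obtain ⟨τ₄, h₄, d₄⟩ := hi 4
      simp only [Set.mem_insert_iff, Set.mem_singleton_iff] at hσ h₁ h₂ h₄
      rw [hn] at d₁ d₂ d₄ ⊢
      rcases hσ with rfl | rfl | rfl <;> rcases h₁ with rfl | rfl | rfl <;>
        rcases h₂ with rfl | rfl | rfl <;> rcases h₄ with rfl | rfl | rfl <;> omega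
    · rw [← sq]; exact pow_ne_one_of_lt_orderOf two_ne_zero (by omega)
  · exact (h.not_five_le_of_eq_inv hm hm5).elim

theorem card_le_of_eq_inv_sq {m : ℕ}
    (h : locallyMaximalPF ((g ^ · : ℤ → G) '' {1, -2, (m : ℤ)})) (hm : orderOf g = 2 * m)
    (hg : 2 < orderOf (g⁻¹ ^ 2)) : Nat.card G ≤ 24 := by
  have hm3 : 3 ≤ m := by
    have hdvd : orderOf (g⁻¹ ^ 2) ∣ m := orderOf_dvd_of_pow_eq_one <| by
      rw [← pow_mul, inv_pow, ← hm, pow_orderOf_eq_one, inv_one]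
    have := Nat.le_of_dvd (by have := orderOf_pos g; omega) hdvd
    omega
  rcases (by omega : m = 3 ∨ m = 4 ∨ 5 ≤ m) with rfl | rfl | hm5
  · exact absurd (by rw [hm]; norm_num)
      (h.1.not_orderOf_dvd_add_sub (p := 1) (q := 3) (r := -2) (by simp) (by simp) (by simp))
  · exact absurd (by rw [hm]; norm_num)
      (h.1.not_orderOf_dvd_add_sub (p := -2) (q := -2) (r := 4) (by simp) (by simp) (by simp))
  have hm56 := h.eq_five_or_eq_six_of_eq_inv_sq hm hm5
  refine (h.card_le_two_mul_orderOf (fun d σ hσ hi => ?_) ?_).trans (by omega)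
  · obtain ⟨τ₁, h₁, d₁⟩ := hi 1
    obtain ⟨τ₂, h₂, d₂⟩ := hi 2
    obtain ⟨τ₄, h₄, d₄⟩ := hi 4
    simp only [Set.mem_insert_iff, Set.mem_singleton_iff] at hσ h₁ h₂ h₄
    rcases hm56 with rfl | rfl <;> rw [hm] at d₁ d₂ d₄ ⊢ <;> push_cast at d₁ d₂ d₄ ⊢ <;>
      rcases hσ with rfl | rfl | rfl <;> rcases h₁ with rfl | rfl | rfl <;>
      rcases h₂ with rfl | rfl | rfl <;> rcases h₄ with rfl | rfl | rfl <;> omega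
  · rw [← sq]; exact pow_ne_one_of_lt_orderOf two_ne_zero (by omega)

theorem card_le_of_four_le_orderOf {a b c : G}
    (h : locallyMaximalPF {a, b, c}) (hc : c * c = 1) (ha : 4 ≤ orderOf a) (hb : 2 < orderOf b)
    (hgen : a ≠ b → closure {a, b} = closure {a, b, c}) : Nat.card G ≤ 24 := by
  have hc1 : c ≠ 1 := by rintro rfl; exact h.1.one_notMem_s15 (by simp)
  have hc_mem : ∀ {g : G}, a ∈ zpowers g → b ∈ zpowers g → a ≠ b → c ∈ zpowers g := by
    intro g hag hbg hab
    refine (closure_le _).2 (Set.insert_subset hag (Set.singleton_subset_iff.2 hbg)) ?_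
    rw [hgen hab]
    exact Subgroup.subset_closure (by simp)
  have ha2 : a ^ 2 ≠ 1 := pow_ne_one_of_lt_orderOf two_ne_zero (by omega)
  have ha3 : a ^ 3 ≠ 1 := pow_ne_one_of_lt_orderOf three_ne_zero (by omega)
  have hne : ∀ x : G, x ^ 3 ≠ 1 → x ≠ x⁻¹ ^ 2 := fun x hx e =>
    hx (calc x ^ 3 = x * x ^ 2 := by group
      _ = 1 := by nth_rw 1 [e]; group)
  rcases h.eq_inv_or_eq_inv_sq_or_eq_inv_sq hc ha with rfl | rfl | rfl
  · have hab : a ≠ a⁻¹ := fun e => ha2 (by rw [sq, mul_eq_one_iff_eq_inv]; exact e)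
    obtain ⟨m, hm, rfl⟩ := exists_orderOf_eq_two_mul_of_mem_zpowers
      (hc_mem (mem_zpowers a) (inv_mem (mem_zpowers a)) hab) hc hc1
    exact card_le_of_eq_inv (m := m) (by simpa [Set.image_insert_eq] using h) hm ha
  · obtain ⟨m, hm, rfl⟩ := exists_orderOf_eq_two_mul_of_mem_zpowers
      (hc_mem (mem_zpowers a) (pow_mem (inv_mem (mem_zpowers a)) 2) (hne a ha3)) hc hc1
    exact card_le_of_eq_inv_sq (m := m) (by simpa [Set.image_insert_eq] using h) hm hb
  · have hab : b⁻¹ ^ 2 ≠ b := fun e => hne b (fun hb3 => ha3 (by rw [e]; exact hb3)) e.symm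
    obtain ⟨m, hm, rfl⟩ := exists_orderOf_eq_two_mul_of_mem_zpowers
      (hc_mem (pow_mem (inv_mem (mem_zpowers b)) 2) (mem_zpowers b) hab) hc hc1
    rw [Set.insert_comm] at h
    exact card_le_of_eq_inv_sq (m := m) (by simpa [Set.image_insert_eq] using h) hm (by omega)

end locallyMaximalPF

end

theorem stmt15_general {G : Type*} [Group G] [Fintype G] (a b c : G)
    (S : Set G) (hS : S = {a, b, c})
    (h : locallyMaximalPF S)
    (hc : c ^ 2 = 1) (ha : 2 < orderOf a) (hb : 2 < orderOf b)
    (hgen : ∀ x ∈ S, ∀ y ∈ S, x ≠ y → Subgroup.closure {x, y} = Subgroup.closure S) :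
    Nat.card G ≤ 24 ∨ (orderOf a = 3 ∧ orderOf b = 3) := by
  subst hS
  rw [sq] at hc
  by_cases h3 : orderOf a = 3 ∧ orderOf b = 3
  · exact Or.inr h3
  refine Or.inl ?_
  rcases not_and_or.1 h3 with ha3 | hb3
  · exact h.card_le_of_four_le_orderOf hc (by omega) hb fun hab => hgen a (by simp) b (by simp) hab
  · rw [Set.insert_comm] at h hgen
    exact h.card_le_of_four_le_orderOf hc (by omega) ha fun hba => hgen b (by simp) a (by simp) hba

theorem stmt15 {G : Type*} [Group G] [Fintype G] (a b c : G)
    (S : Set G) (hS : S = {a, b, c}) (hcard : S.ncard = 3)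
    (h : locallyMaximalPF S)
    (hc : c ^ 2 = 1) (hc1 : c ≠ 1) (ha : 2 < orderOf a) (hb : 2 < orderOf b)
    (hgen : ∀ x ∈ S, ∀ y ∈ S, x ≠ y → Subgroup.closure {x, y} = Subgroup.closure S) :
    Nat.card G ≤ 24 ∨ (orderOf a = 3 ∧ orderOf b = 3) :=
  stmt15_general a b c S hS h hc ha hb hgen
end
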